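/- arXiv:0910.1914 — 5 statements merged into one kernel-verified Lean document; each statement's English description precedes it below -/
import Mathlib

section
/- Let M0, Mt, M1 ∈ SL(2,C), with p_ν = Tr(M_ν) for ν ∈ {0,t,1,∞} where M∞ = (M1 Mt M0)^{-1}, and p_{0t} = Tr(M0 Mt), p_{1t} = Tr(M1 Mt), p_{01} = Tr(M0 M1). Then Tr(M0 Mt^{-1} M1 Mt) = p_0 p_1 + p_t p_∞ − p_{0t} p_{1t} − p_{01}. -/
/-!
Cayley–Hamilton in dimension two reads `adj A = tr A • 1 - A`, so for `det A = 1` inversion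
is affine in `A`, and `tr (A * B⁻¹) = tr A * tr B - tr (A * B)`. Substituting
`Mt⁻¹ = pt • 1 - Mt` splits the left side into `pt * tr (M0 M1 Mt)`, which is `pt * p∞`
because an `SL(2)` matrix and its inverse have the same trace, and `tr ((M0 Mt) (M1 Mt))`,
which the identity above turns into `p0t * p1t - tr (M0 M1⁻¹) = p0t * p1t - p0 * p1 + p01`.
-/

open Matrix

namespace Matrix

variable {R : Type*} [CommRing R]

theorem adjugate_fin_two_eq_trace_smul_sub (A : Matrix (Fin 2) (Fin 2) R) :
    A.adjugate = A.trace • 1 - A := by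
  ext i j
  fin_cases i <;> fin_cases j <;> simp [adjugate_fin_two, trace_fin_two]

variable {A B : Matrix (Fin 2) (Fin 2) R}

theorem inv_eq_trace_smul_sub_of_det_eq_one (hA : A.det = 1) : A⁻¹ = A.trace • 1 - A := by
  rw [inv_def, hA, Ring.inverse_one, one_smul, adjugate_fin_two_eq_trace_smul_sub]

theorem trace_inv_of_det_eq_one (hA : A.det = 1) : A⁻¹.trace = A.trace := by
  rw [inv_eq_trace_smul_sub_of_det_eq_one hA, trace_sub, trace_smul, trace_one, Fintype.card_fin,
    smul_eq_mul]
  push_cast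
  ring

theorem trace_mul_inv_of_det_eq_one (A : Matrix (Fin 2) (Fin 2) R) (hB : B.det = 1) :
    (A * B⁻¹).trace = A.trace * B.trace - (A * B).trace := by
  rw [inv_eq_trace_smul_sub_of_det_eq_one hB, Matrix.mul_sub, Matrix.mul_smul, Matrix.mul_one,
    trace_sub, trace_smul, smul_eq_mul, mul_comm]

end Matrix

/-- Trace of the conjugated product `M0 Mt⁻¹ M1 Mt` in terms of the seven trace coordinates. -/
theorem trace_conjugated_product (M0 Mt M1 : Matrix (Fin 2) (Fin 2) ℂ)
    (h0 : M0.det = 1) (ht : Mt.det = 1) (h1 : M1.det = 1) :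
    let Minf := (M1 * Mt * M0)⁻¹
    let p0 := M0.trace
    let pt := Mt.trace
    let p1 := M1.trace
    let pinf := Minf.trace
    let p0t := (M0 * Mt).trace
    let p1t := (M1 * Mt).trace
    let p01 := (M0 * M1).trace
    (M0 * Mt⁻¹ * M1 * Mt).trace = p0 * p1 + pt * pinf - p0t * p1t - p01 := by
  intro Minf p0 pt p1 pinf p0t p1t p01
  have hpinf : pinf = (M0 * M1 * Mt).trace :=
    (trace_inv_of_det_eq_one (by simp [det_mul, h0, ht, h1])).trans (trace_mul_cycle M1 Mt M0)
  have hsquare : (M0 * Mt * (M1 * Mt)).trace = p0t * p1t - (p0 * p1 - p01) := by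
    have h : (M0 * M1⁻¹).trace = p0t * p1t - (M0 * Mt * (M1 * Mt)).trace := by
      rw [← trace_mul_inv_of_det_eq_one _ (by simp [det_mul, ht, h1]), Matrix.mul_inv_rev,
        ← Matrix.mul_assoc, Matrix.mul_assoc M0, mul_nonsing_inv Mt (by simp [ht]),
        Matrix.mul_one]
    rw [trace_mul_inv_of_det_eq_one M0 h1] at h
    change p0 * p1 - p01 = _ at h
    linear_combination h
  calc (M0 * Mt⁻¹ * M1 * Mt).trace
      = pt * (M0 * M1 * Mt).trace - (M0 * Mt * (M1 * Mt)).trace := by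
        rw [inv_eq_trace_smul_sub_of_det_eq_one ht]
        simp only [Matrix.mul_sub, Matrix.sub_mul, Matrix.mul_smul, Matrix.smul_mul,
          Matrix.mul_one, trace_sub, trace_smul, smul_eq_mul, Matrix.mul_assoc]
        rfl
    _ = p0 * p1 + pt * pinf - p0t * p1t - p01 := by rw [hpinf, hsquare]; ring
end

section
/- Fix constants α0, β0, γ0, α1 ∈ C and let q, p, u, v, w be differentiable complex-valued functions on an interval satisfying the Tracy–Widom system: t(1−t)q' = αq + βp, t(1−t)p' = −γq − αp, u' = q², v' = pq, w' = p², where α = α0 + α1 t + v, β = β0 + (2α1−1)u, γ = γ0 − (2α1+1)w. Then I1 = 2αpq + βp² + γq² − 2α1 v and I2 = (v+α0)² − βγ − 2α1 t(1−t) pq + 2α1(1−t)v − I1 t are constant in t. -/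
/-!
Write `m = t(1-t)` and `α, β, γ` as in the statement. Since `α' = α1 + pq`, `β' = (2α1-1)q²`,
`γ' = -(2α1+1)p²` and `v' = pq`, the quartic terms of `I1'` cancel and
`I1' = 2(p'(αq + βp) + q'(αp + γq))`, which the system turns into `2(p'·mq' - q'·mp') = 0`.
Likewise, the `α0`, `t` and `v` terms of `I2'` cancel against `-I1`, leaving
`I2' = 2α1(βp² - γq² - m(pq)') - t·I1'`; the system gives `m(pq)' = βp² - γq²`.
Neither step divides by `m`, so the singular points `t = 0, 1` need no special care.
-/

open Set

theorem IsOpen.eq_of_hasDerivAt_zero {E : Type*} [NormedAddCommGroup E] [NormedSpace ℝ E]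
    {s : Set ℝ} (hs : IsOpen s) (hs' : IsPreconnected s) {f : ℝ → E}
    (hf : ∀ t ∈ s, HasDerivAt f 0 t) {x y : ℝ} (hx : x ∈ s) (hy : y ∈ s) : f x = f y :=
  hs.is_const_of_deriv_eq_zero hs'
    (fun t ht => (hf t ht).differentiableAt.differentiableWithinAt)
    (fun t ht => (hf t ht).deriv) hx hy

namespace TracyWidom

variable (α0 β0 γ0 α1 : ℂ)

def alpha (t v : ℂ) : ℂ := α0 + α1 * t + v

def beta (u : ℂ) : ℂ := β0 + (2 * α1 - 1) * u

def gamma (w : ℂ) : ℂ := γ0 - (2 * α1 + 1) * w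

def firstIntegral (t q p u v w : ℂ) : ℂ :=
  2 * alpha α0 α1 t v * p * q + beta β0 α1 u * p ^ 2 + gamma γ0 α1 w * q ^ 2 - 2 * α1 * v

def secondIntegral (t q p u v w : ℂ) : ℂ :=
  (v + α0) ^ 2 - beta β0 α1 u * gamma γ0 α1 w - 2 * α1 * t * (1 - t) * p * q
    + 2 * α1 * (1 - t) * v - firstIntegral α0 β0 γ0 α1 t q p u v w * t

section Algebra

variable {t q p u v w q' p' : ℂ}
  (hq' : t * (1 - t) * q' = alpha α0 α1 t v * q + beta β0 α1 u * p)
  (hp' : t * (1 - t) * p' = -gamma γ0 α1 w * q - alpha α0 α1 t v * p)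

include hq' hp'

theorem firstIntegral_deriv_eq_zero :
    p' * (alpha α0 α1 t v * q + beta β0 α1 u * p)
      + q' * (alpha α0 α1 t v * p + gamma γ0 α1 w * q) = 0 := by
  linear_combination (-p') * hq' + q' * hp'

theorem secondIntegral_deriv_eq_zero :
    beta β0 α1 u * p ^ 2 - gamma γ0 α1 w * q ^ 2 - t * (1 - t) * (p' * q + p * q') = 0 := by
  linear_combination (-p) * hq' - q * hp'

end Algebra

section Calculus

variable {t : ℝ}

theorem hasDerivAt_alpha {v : ℝ → ℂ} {v' : ℂ} (hv : HasDerivAt v v' t) :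
    HasDerivAt (fun s : ℝ => alpha α0 α1 s (v s)) (α1 + v') t :=
  ((((hasDerivAt_id (t : ℂ)).comp_ofReal.const_mul α1).const_add α0).fun_add hv).congr_deriv
    (by rw [mul_one])

theorem hasDerivAt_beta {u : ℝ → ℂ} {u' : ℂ} (hu : HasDerivAt u u' t) :
    HasDerivAt (fun s => beta β0 α1 (u s)) ((2 * α1 - 1) * u') t :=
  (hu.const_mul _).const_add β0

theorem hasDerivAt_gamma {w : ℝ → ℂ} {w' : ℂ} (hw : HasDerivAt w w' t) :
    HasDerivAt (fun s => gamma γ0 α1 (w s)) (-((2 * α1 + 1) * w')) t :=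
  (hw.const_mul _).const_sub γ0

variable {q p u v w : ℝ → ℂ} {q' p' : ℂ}
  (hq : HasDerivAt q q' t) (hp : HasDerivAt p p' t) (hu : HasDerivAt u (q t ^ 2) t)
  (hv : HasDerivAt v (p t * q t) t) (hw : HasDerivAt w (p t ^ 2) t)

include hq hp hu hv hw

theorem hasDerivAt_firstIntegral :
    HasDerivAt (fun s : ℝ => firstIntegral α0 β0 γ0 α1 s (q s) (p s) (u s) (v s) (w s))
      (2 * (p' * (alpha α0 α1 t (v t) * q t + beta β0 α1 (u t) * p t)
        + q' * (alpha α0 α1 t (v t) * p t + gamma γ0 α1 (w t) * q t))) t := by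
  refine (((hasDerivAt_alpha α0 α1 hv).const_mul 2).fun_mul hp |>.fun_mul hq
    |>.fun_add ((hasDerivAt_beta β0 α1 hu).fun_mul (hp.fun_pow 2))
    |>.fun_add ((hasDerivAt_gamma γ0 α1 hw).fun_mul (hq.fun_pow 2))
    |>.fun_sub (hv.const_mul (2 * α1))).congr_deriv ?_
  norm_num
  ring

theorem hasDerivAt_secondIntegral {d : ℂ}
    (hI : HasDerivAt (fun s : ℝ => firstIntegral α0 β0 γ0 α1 s (q s) (p s) (u s) (v s) (w s))
      d t) :
    HasDerivAt (fun s : ℝ => secondIntegral α0 β0 γ0 α1 s (q s) (p s) (u s) (v s) (w s))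
      (2 * α1 * (beta β0 α1 (u t) * p t ^ 2 - gamma γ0 α1 (w t) * q t ^ 2
        - t * (1 - t) * (p' * q t + p t * q')) - t * d) t := by
  have hT : HasDerivAt (fun s : ℝ => (s : ℂ)) 1 t := (hasDerivAt_id (t : ℂ)).comp_ofReal
  refine ((hv.add_const α0).fun_pow 2
    |>.fun_sub ((hasDerivAt_beta β0 α1 hu).fun_mul (hasDerivAt_gamma γ0 α1 hw))
    |>.fun_sub ((hT.const_mul (2 * α1)).fun_mul (hT.const_sub 1) |>.fun_mul hp |>.fun_mul hq)
    |>.fun_add (((hT.const_sub 1).const_mul (2 * α1)).fun_mul hv)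
    |>.fun_sub (hI.fun_mul hT)).congr_deriv ?_
  simp only [firstIntegral, alpha, beta, gamma]
  norm_num
  ring

end Calculus

end TracyWidom

open TracyWidom

/-- First integrals of the Tracy–Widom system: `I1` and `I2` are constant in `t`. -/
theorem tracy_widom_first_integrals (α0 β0 γ0 α1 : ℂ) (a b : ℝ)
    (q p u v w qd pd : ℝ → ℂ)
    (hq : ∀ t ∈ Set.Ioo a b, HasDerivAt q (qd t) t)
    (hp : ∀ t ∈ Set.Ioo a b, HasDerivAt p (pd t) t)
    (hu : ∀ t ∈ Set.Ioo a b, HasDerivAt u ((q t) ^ 2) t)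
    (hv : ∀ t ∈ Set.Ioo a b, HasDerivAt v (p t * q t) t)
    (hw : ∀ t ∈ Set.Ioo a b, HasDerivAt w ((p t) ^ 2) t)
    (heqq : ∀ t ∈ Set.Ioo a b, (t : ℂ) * (1 - (t : ℂ)) * qd t =
      (α0 + α1 * (t : ℂ) + v t) * q t + (β0 + (2 * α1 - 1) * u t) * p t)
    (heqp : ∀ t ∈ Set.Ioo a b, (t : ℂ) * (1 - (t : ℂ)) * pd t =
      -(γ0 - (2 * α1 + 1) * w t) * q t - (α0 + α1 * (t : ℂ) + v t) * p t) :
    ∀ t1 ∈ Set.Ioo a b, ∀ t2 ∈ Set.Ioo a b,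
      (2 * (α0 + α1 * (t1 : ℂ) + v t1) * p t1 * q t1 + (β0 + (2 * α1 - 1) * u t1) * (p t1) ^ 2
        + (γ0 - (2 * α1 + 1) * w t1) * (q t1) ^ 2 - 2 * α1 * v t1
       = 2 * (α0 + α1 * (t2 : ℂ) + v t2) * p t2 * q t2 + (β0 + (2 * α1 - 1) * u t2) * (p t2) ^ 2
        + (γ0 - (2 * α1 + 1) * w t2) * (q t2) ^ 2 - 2 * α1 * v t2)
      ∧
      ((v t1 + α0) ^ 2 - (β0 + (2 * α1 - 1) * u t1) * (γ0 - (2 * α1 + 1) * w t1)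
        - 2 * α1 * (t1 : ℂ) * (1 - (t1 : ℂ)) * p t1 * q t1 + 2 * α1 * (1 - (t1 : ℂ)) * v t1
        - (2 * (α0 + α1 * (t1 : ℂ) + v t1) * p t1 * q t1 + (β0 + (2 * α1 - 1) * u t1) * (p t1) ^ 2
           + (γ0 - (2 * α1 + 1) * w t1) * (q t1) ^ 2 - 2 * α1 * v t1) * (t1 : ℂ)
       = (v t2 + α0) ^ 2 - (β0 + (2 * α1 - 1) * u t2) * (γ0 - (2 * α1 + 1) * w t2)
        - 2 * α1 * (t2 : ℂ) * (1 - (t2 : ℂ)) * p t2 * q t2 + 2 * α1 * (1 - (t2 : ℂ)) * v t2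
        - (2 * (α0 + α1 * (t2 : ℂ) + v t2) * p t2 * q t2 + (β0 + (2 * α1 - 1) * u t2) * (p t2) ^ 2
           + (γ0 - (2 * α1 + 1) * w t2) * (q t2) ^ 2 - 2 * α1 * v t2) * (t2 : ℂ)) := by
  have hI1 : ∀ t ∈ Ioo a b, HasDerivAt
      (fun s : ℝ => firstIntegral α0 β0 γ0 α1 s (q s) (p s) (u s) (v s) (w s)) 0 t := by
    intro t ht
    have h := hasDerivAt_firstIntegral α0 β0 γ0 α1 (hq t ht) (hp t ht) (hu t ht) (hv t ht) (hw t ht)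
    rwa [firstIntegral_deriv_eq_zero α0 β0 γ0 α1 (heqq t ht) (heqp t ht), mul_zero] at h
  have hI2 : ∀ t ∈ Ioo a b, HasDerivAt
      (fun s : ℝ => secondIntegral α0 β0 γ0 α1 s (q s) (p s) (u s) (v s) (w s)) 0 t := by
    intro t ht
    have h := hasDerivAt_secondIntegral α0 β0 γ0 α1 (hq t ht) (hp t ht) (hu t ht) (hv t ht)
      (hw t ht) (hI1 t ht)
    rwa [secondIntegral_deriv_eq_zero α0 β0 γ0 α1 (heqq t ht) (heqp t ht), mul_zero,
      mul_zero, sub_zero] at h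
  intro t1 ht1 t2 ht2
  exact ⟨isOpen_Ioo.eq_of_hasDerivAt_zero isPreconnected_Ioo hI1 ht1 ht2,
    isOpen_Ioo.eq_of_hasDerivAt_zero isPreconnected_Ioo hI2 ht1 ht2⟩
end

section
/- Under the hypotheses of the Tracy–Widom system with ζ = 2αpq + βp² + γq² and constants I1, I2 defined as above, ζ satisfies the second-order ODE (t(1−t)ζ'')² + 4(ζ' − α1²)(tζ' − ζ)² − 4ζ'(tζ' − ζ)(ζ' + 2α0α1 − I1) = 4(I1 + I2)(ζ')². -/
/-!
Along the flow, `ζ = 2αpq + βp² + γq²` has derivative `ζ' = 2α₁pq`: the terms coming from `p'`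
and `q'` cancel because the system is Hamiltonian in `(q, p)`, and what is left comes from
`α' = α₁ + pq`, `β' = (2α₁ - 1)q²`, `γ' = -(2α₁ + 1)p²`. Differentiating once more and using the
system again gives `t(1 - t)ζ'' = 2α₁(βp² - γq²)`. With these substitutions the claimed ODE becomes
a polynomial identity in `α₀, α₁, t, v, p, q, β, γ`.
-/

open Filter Set Topology

theorem deriv_deriv_eq_of_eventually_hasDerivAt {𝕜 F : Type*} [NontriviallyNormedField 𝕜]
    [NormedAddCommGroup F] [NormedSpace 𝕜 F] {f g : 𝕜 → F} {g' : F} {t : 𝕜}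
    (hf : ∀ᶠ s in 𝓝 t, HasDerivAt f (g s) s) (hg : HasDerivAt g g' t) :
    deriv (deriv f) t = g' :=
  (hg.congr_of_eventuallyEq (hf.mono fun _ hs => hs.deriv)).deriv

namespace TracyWidom

theorem sigma_form_identity {R : Type*} [CommRing R] (α0 α1 t v p q β γ : R) :
    let α := α0 + α1 * t + v
    let ζ := 2 * α * p * q + β * p ^ 2 + γ * q ^ 2
    let ζ' := 2 * α1 * (p * q)
    let I1 := ζ - 2 * α1 * v
    let I2 := (v + α0) ^ 2 - β * γ - 2 * α1 * t * (1 - t) * p * q + 2 * α1 * (1 - t) * v - I1 * t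
    (2 * α1 * (β * p ^ 2 - γ * q ^ 2)) ^ 2 + 4 * (ζ' - α1 ^ 2) * (t * ζ' - ζ) ^ 2
      - 4 * ζ' * (t * ζ' - ζ) * (ζ' + 2 * α0 * α1 - I1) = 4 * (I1 + I2) * ζ' ^ 2 := by
  intros
  ring

theorem hasDerivAt_zeta {𝕜 𝔸 : Type*} [NontriviallyNormedField 𝕜] [NormedCommRing 𝔸]
    [NormedAlgebra 𝕜 𝔸] {α β γ p q : 𝕜 → 𝔸} {α1 c p' q' : 𝔸} {t : 𝕜}
    (hp : HasDerivAt p p' t) (hq : HasDerivAt q q' t)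
    (hα : HasDerivAt α (α1 + p t * q t) t) (hβ : HasDerivAt β ((2 * α1 - 1) * q t ^ 2) t)
    (hγ : HasDerivAt γ (-((2 * α1 + 1) * p t ^ 2)) t)
    (hq' : c * q' = α t * q t + β t * p t) (hp' : c * p' = -γ t * q t - α t * p t) :
    HasDerivAt (fun s => 2 * α s * p s * q s + β s * p s ^ 2 + γ s * q s ^ 2)
      (2 * α1 * (p t * q t)) t := by
  have h := (((hα.const_mul 2).mul hp).mul hq).add (hβ.mul (hp.pow 2)) |>.add (hγ.mul (hq.pow 2))
  refine h.congr_deriv ?_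
  simp only [Pi.mul_apply, Pi.pow_apply]
  linear_combination (-2 * p') * hq' + (2 * q') * hp'

end TracyWidom

/-- The logarithmic derivative `ζ` of the Tracy–Widom determinant satisfies a second-order ODE
(σ-form of Painlevé VI, up to an affine change of variables). -/
theorem tracy_widom_zeta_ode (α0 β0 γ0 α1 : ℂ) (a b : ℝ)
    (q p u v w qd pd : ℝ → ℂ)
    (hq : ∀ t ∈ Set.Ioo a b, HasDerivAt q (qd t) t)
    (hp : ∀ t ∈ Set.Ioo a b, HasDerivAt p (pd t) t)
    (hu : ∀ t ∈ Set.Ioo a b, HasDerivAt u ((q t) ^ 2) t)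
    (hv : ∀ t ∈ Set.Ioo a b, HasDerivAt v (p t * q t) t)
    (hw : ∀ t ∈ Set.Ioo a b, HasDerivAt w ((p t) ^ 2) t)
    (heqq : ∀ t ∈ Set.Ioo a b, (t : ℂ) * (1 - (t : ℂ)) * qd t =
      (α0 + α1 * (t : ℂ) + v t) * q t + (β0 + (2 * α1 - 1) * u t) * p t)
    (heqp : ∀ t ∈ Set.Ioo a b, (t : ℂ) * (1 - (t : ℂ)) * pd t =
      -(γ0 - (2 * α1 + 1) * w t) * q t - (α0 + α1 * (t : ℂ) + v t) * p t) :
    ∀ t ∈ Set.Ioo a b,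
      (fun ζ : ℝ → ℂ => fun I1 I2 : ℝ → ℂ =>
        ((t : ℂ) * (1 - (t : ℂ)) * deriv (deriv ζ) t) ^ 2
          + 4 * (deriv ζ t - α1 ^ 2) * ((t : ℂ) * deriv ζ t - ζ t) ^ 2
          - 4 * deriv ζ t * ((t : ℂ) * deriv ζ t - ζ t) * (deriv ζ t + 2 * α0 * α1 - I1 t)
        = 4 * (I1 t + I2 t) * (deriv ζ t) ^ 2)
      (fun s : ℝ =>
        2 * (α0 + α1 * (s : ℂ) + v s) * p s * q s + (β0 + (2 * α1 - 1) * u s) * (p s) ^ 2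
          + (γ0 - (2 * α1 + 1) * w s) * (q s) ^ 2)
      (fun s : ℝ =>
        2 * (α0 + α1 * (s : ℂ) + v s) * p s * q s + (β0 + (2 * α1 - 1) * u s) * (p s) ^ 2
          + (γ0 - (2 * α1 + 1) * w s) * (q s) ^ 2 - 2 * α1 * v s)
      (fun s : ℝ =>
        (v s + α0) ^ 2 - (β0 + (2 * α1 - 1) * u s) * (γ0 - (2 * α1 + 1) * w s)
          - 2 * α1 * (s : ℂ) * (1 - (s : ℂ)) * p s * q s + 2 * α1 * (1 - (s : ℂ)) * v s
          - (2 * (α0 + α1 * (s : ℂ) + v s) * p s * q s + (β0 + (2 * α1 - 1) * u s) * (p s) ^ 2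
             + (γ0 - (2 * α1 + 1) * w s) * (q s) ^ 2 - 2 * α1 * v s) * (s : ℂ)) := by
  intro t ht
  have hα : ∀ s ∈ Ioo a b, HasDerivAt (fun x : ℝ => α0 + α1 * (x : ℂ) + v x) (α1 + p s * q s) s :=
    fun s hs =>
      ((((hasDerivAt_id s).ofReal_comp.const_mul α1).const_add α0).add (hv s hs)).congr_deriv
        (by simp)
  have hβ : ∀ s ∈ Ioo a b,
      HasDerivAt (fun x => β0 + (2 * α1 - 1) * u x) ((2 * α1 - 1) * q s ^ 2) s :=
    fun s hs => ((hu s hs).const_mul _).const_add β0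
  have hγ : ∀ s ∈ Ioo a b,
      HasDerivAt (fun x => γ0 - (2 * α1 + 1) * w x) (-((2 * α1 + 1) * p s ^ 2)) s :=
    fun s hs => ((hw s hs).const_mul _).const_sub γ0
  set ζ : ℝ → ℂ := fun s =>
    2 * (α0 + α1 * (s : ℂ) + v s) * p s * q s + (β0 + (2 * α1 - 1) * u s) * (p s) ^ 2
      + (γ0 - (2 * α1 + 1) * w s) * (q s) ^ 2
  have hζ' : ∀ s ∈ Ioo a b, HasDerivAt ζ (2 * α1 * (p s * q s)) s := fun s hs =>
    TracyWidom.hasDerivAt_zeta (hp s hs) (hq s hs) (hα s hs) (hβ s hs) (hγ s hs) (heqq s hs)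
      (heqp s hs)
  have hζ'' : (t : ℂ) * (1 - t) * deriv (deriv ζ) t = 2 * α1 *
      ((β0 + (2 * α1 - 1) * u t) * p t ^ 2 - (γ0 - (2 * α1 + 1) * w t) * q t ^ 2) := by
    rw [deriv_deriv_eq_of_eventually_hasDerivAt (eventually_of_mem (Ioo_mem_nhds ht.1 ht.2) hζ')
      (((hp t ht).mul (hq t ht)).const_mul (2 * α1))]
    linear_combination 2 * α1 * (q t * heqp t ht + p t * heqq t ht)
  beta_reduce
  rw [hζ'', (hζ' t ht).deriv]
  exact TracyWidom.sigma_form_identity α0 α1 t (v t) (p t) (q t)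
    (β0 + (2 * α1 - 1) * u t) (γ0 - (2 * α1 + 1) * w t)
end

section
/- For all n ≥ 1 and all x ∈ C avoiding poles, the Gauss multiplication formula holds: Γ(nx) = (2π)^{−(n−1)/2} n^{nx−1/2} ∏_{k=0}^{n−1} Γ(x + k/n). -/
/-!
Gauss's argument through Euler's limit `Γ(s) = lim Γₘ(s)`, `Γₘ(s) = m^s m! / (s (s+1) ⋯ (s+m))`.
Grouping the factors of `nx (nx+1) ⋯ (nx+nm+n-1)` by their residue mod `n` shows that
`n^{nx} ∏ₖ Γₘ(x + k/n)` and `Γ_{nm+n-1}(nx)` differ, up to a factor tending to `1`, by a quantity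
`cₘ` that does not involve `x`. Hence `n^{nx} ∏ₖ Γ(x + k/n) / Γ(nx)` does not depend on `x`, and at
`x = 1/n` it is `n ∏_{k<n-1} Γ((k+1)/n)`. Pairing `k` with `n-2-k`, the reflection formula gives
`(∏_{k<n-1} Γ((k+1)/n))² = πⁿ⁻¹ / ∏_{k<n-1} sin(π(k+1)/n) = (2π)ⁿ⁻¹ / n`; here
`∏_{k<n-1} 2 sin(π(k+1)/n) = n` is the norm of `∏_{k<n-1} (1 - ζ^{k+1}) = n` for a primitive `n`-th
root of unity `ζ`.
-/

open Complex Finset Filter Topology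

open scoped Real Nat

theorem Complex.prod_cpow_eq_cpow_sum {ι : Type*} (s : Finset ι) (f : ι → ℂ) {w : ℂ}
    (hw : w ≠ 0) : ∏ i ∈ s, w ^ f i = w ^ ∑ i ∈ s, f i := by
  simp only [cpow_def_of_ne_zero hw, ← Complex.exp_sum, mul_sum]

theorem sum_range_add_div_natCast {n : ℕ} (hn : n ≠ 0) (x : ℂ) :
    ∑ k ∈ range n, (x + k / n) = n * x + ((n : ℂ) - 1) / 2 := by
  have h : ((∑ k ∈ range n, k : ℕ) : ℂ) * 2 = n * ((n : ℂ) - 1) := by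
    rw [← Nat.cast_ofNat, ← Nat.cast_mul, sum_range_id_mul_two, Nat.cast_mul,
      Nat.cast_pred (Nat.pos_of_ne_zero hn)]
  have hn0 : (n : ℂ) ≠ 0 := by exact_mod_cast hn
  rw [sum_add_distrib, sum_const, card_range, nsmul_eq_mul, ← sum_div]
  push_cast at h
  field_simp
  linear_combination h

theorem prod_range_mul_eq_prod_prod {M : Type*} [CommMonoid M] (f : ℕ → M) (n m : ℕ) :
    ∏ i ∈ range (n * m), f i = ∏ j ∈ range m, ∏ k ∈ range n, f (n * j + k) := by
  induction m with
  | zero => simp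
  | succ m ih => rw [Nat.mul_succ, prod_range_add, ih, prod_range_succ]

theorem prod_prod_add_div_natCast_add {n : ℕ} (hn : n ≠ 0) (x : ℂ) (m : ℕ) :
    ∏ k ∈ range n, ∏ j ∈ range m, (x + k / n + j) =
      (∏ i ∈ range (n * m), ((n : ℂ) * x + i)) / (n : ℂ) ^ (n * m) := by
  have hn0 : (n : ℂ) ≠ 0 := by exact_mod_cast hn
  have hterm : ∀ k j : ℕ, x + k / n + j = ((n : ℂ) * x + (n * j + k : ℕ)) / n := fun k j => by
    push_cast
    field_simp
    ring
  simp only [hterm, prod_div_distrib, prod_const, card_range, ← pow_mul]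
  rw [Finset.prod_comm, prod_range_mul_eq_prod_prod, mul_comm m]

theorem prod_GammaSeq_add_div_natCast {n m : ℕ} (hn : n ≠ 0) (hm : m ≠ 0) (x : ℂ) :
    ∏ k ∈ range n, GammaSeq (x + k / n) m =
      (m : ℂ) ^ ((n : ℂ) * x + ((n : ℂ) - 1) / 2) * (m ! : ℂ) ^ n * (n : ℂ) ^ (n * (m + 1)) /
        ∏ i ∈ range (n * (m + 1)), ((n : ℂ) * x + i) := by
  simp only [GammaSeq, prod_div_distrib, prod_mul_distrib, prod_const, card_range]
  rw [prod_cpow_eq_cpow_sum _ _ (by exact_mod_cast hm), sum_range_add_div_natCast hn,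
    prod_prod_add_div_natCast_add hn, div_div_eq_mul_div]

noncomputable def gaussConst (n m : ℕ) : ℂ :=
  (m : ℂ) ^ (((n : ℂ) - 1) / 2) * (m ! : ℂ) ^ n * (n : ℂ) ^ (n * (m + 1)) /
    ((n * m + (n - 1))! : ℂ)

theorem natCast_cpow_mul_prod_GammaSeq {n m : ℕ} (hn : n ≠ 0) (hm : m ≠ 0) (x : ℂ) :
    (n : ℂ) ^ ((n : ℂ) * x) * (∏ k ∈ range n, GammaSeq (x + k / n) m) *
        ((n * m + (n - 1) : ℕ) : ℂ) ^ ((n : ℂ) * x) =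
      GammaSeq (n * x) (n * m + (n - 1)) * ((n * m : ℕ) : ℂ) ^ ((n : ℂ) * x) *
        gaussConst n m := by
  have hN : n * m + (n - 1) + 1 = n * (m + 1) := by
    rw [Nat.mul_succ]
    omega
  have hfact : ((n * m + (n - 1))! : ℂ) ≠ 0 := by exact_mod_cast (n * m + (n - 1)).factorial_ne_zero
  rw [prod_GammaSeq_add_div_natCast hn hm, GammaSeq, hN, gaussConst, Nat.cast_mul,
    natCast_mul_natCast_cpow, cpow_add _ _ (by exact_mod_cast hm)]
  field_simp

theorem tendsto_natCast_cpow_div_natCast_add_cpow (s : ℂ) (c : ℕ) :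
    Tendsto (fun N : ℕ => (N : ℂ) ^ s / ((N + c : ℕ) : ℂ) ^ s) atTop (𝓝 1) := by
  have hratio : Tendsto (fun N : ℕ => ((N : ℂ) / (N + c)) ^ s) atTop (𝓝 1) := by
    have h := (continuousAt_cpow_const (b := s) (by simp : (1 : ℂ) ∈ slitPlane)).tendsto.comp
      (tendsto_natCast_div_add_atTop (c : ℂ))
    rwa [one_cpow] at h
  refine hratio.congr fun N => ?_
  rw [← ofReal_natCast, ← ofReal_natCast (N + c), ← div_cpow_ofReal_nonneg (by positivity)
    (by positivity)]
  push_cast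
  rfl

theorem natCast_mul_ne_neg_natCast {n : ℕ} (hn : 0 < n) {x : ℂ}
    (hx : ∀ k : ℕ, k < n → ∀ m : ℕ, x + (k : ℂ) / (n : ℂ) ≠ -(m : ℂ)) (i : ℕ) :
    (n : ℂ) * x ≠ -(i : ℂ) := by
  intro h
  apply hx (i % n) (Nat.mod_lt _ hn) (i / n)
  have hi : (i : ℂ) = n * (i / n : ℕ) + (i % n : ℕ) := by exact_mod_cast (Nat.div_add_mod i n).symm
  have hn0 : (n : ℂ) ≠ 0 := by exact_mod_cast hn.ne'
  field_simp
  linear_combination h - hi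

noncomputable def gaussRatio (n : ℕ) (x : ℂ) : ℂ :=
  (n : ℂ) ^ ((n : ℂ) * x) * (∏ k ∈ range n, Gamma (x + k / n)) / Gamma (n * x)

theorem tendsto_gaussConst {n : ℕ} (hn : 0 < n) {x : ℂ}
    (hx : ∀ k : ℕ, k < n → ∀ m : ℕ, x + (k : ℂ) / (n : ℂ) ≠ -(m : ℂ)) :
    Tendsto (gaussConst n) atTop (𝓝 (gaussRatio n x)) := by
  have hG : Gamma (n * x) ≠ 0 := Gamma_ne_zero (natCast_mul_ne_neg_natCast hn hx)
  have hmul : Tendsto (fun m : ℕ => n * m) atTop atTop :=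
    tendsto_atTop_mono (fun m => Nat.le_mul_of_pos_left m hn) tendsto_id
  have hA : Tendsto (fun m => ∏ k ∈ range n, GammaSeq (x + k / n) m) atTop
      (𝓝 (∏ k ∈ range n, Gamma (x + k / n))) :=
    tendsto_finsetProd _ fun k _ => GammaSeq_tendsto_Gamma _
  have hB : Tendsto (fun m => GammaSeq (n * x) (n * m + (n - 1))) atTop (𝓝 (Gamma (n * x))) :=
    (GammaSeq_tendsto_Gamma _).comp (tendsto_atTop_mono (fun m => Nat.le_add_right _ _) hmul)
  have hE : Tendsto (fun m => ((n * m : ℕ) : ℂ) ^ ((n : ℂ) * x) /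
      ((n * m + (n - 1) : ℕ) : ℂ) ^ ((n : ℂ) * x)) atTop (𝓝 1) :=
    (tendsto_natCast_cpow_div_natCast_add_cpow _ _).comp hmul
  have hlim := (tendsto_const_nhds (x := (n : ℂ) ^ ((n : ℂ) * x))).mul hA |>.div (hB.mul hE)
    (by simpa using hG)
  rw [mul_one] at hlim
  refine hlim.congr' ?_
  filter_upwards [eventually_ne_atTop 0, hB.eventually_ne hG] with m hm hBm
  have hpow : ∀ N : ℕ, N ≠ 0 → (N : ℂ) ^ ((n : ℂ) * x) ≠ 0 := fun N hN => by
    simp [cpow_eq_zero_iff, hN]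
  have hnm := hpow (n * m) (by positivity)
  have hN := hpow (n * m + (n - 1)) (by positivity)
  have h := natCast_cpow_mul_prod_GammaSeq hn.ne' hm x
  simp only [Pi.div_apply]
  field_simp
  linear_combination h

theorem Real.prod_two_mul_sin_pi_mul_div (n : ℕ) :
    ∏ k ∈ range n, 2 * Real.sin (π * (k + 1) / (n + 1)) = n + 1 := by
  have hμ := Complex.isPrimitiveRoot_exp (n + 1) n.succ_ne_zero
  have h := congrArg (‖·‖) hμ.prod_one_sub_pow_eq_order
  simp only [norm_prod] at h
  rw [← Nat.cast_succ, Complex.norm_natCast, Nat.cast_succ] at h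
  push_cast at h
  refine (prod_congr rfl fun k hk => ?_).trans h
  have hk : (k : ℝ) + 1 ≤ n := by exact_mod_cast mem_range.mp hk
  have harg : Complex.exp (2 * π * I / (n + 1)) ^ (k + 1) =
      Complex.exp (I * ↑(2 * π * (k + 1) / (n + 1))) := by
    rw [← Complex.exp_nat_mul]
    congr 1
    push_cast
    ring
  rw [harg, norm_sub_rev, Complex.norm_exp_I_mul_ofReal_sub_one, Real.norm_eq_abs,
    abs_of_nonneg]
  · congr 2
    ring
  · refine mul_nonneg zero_le_two (Real.sin_nonneg_of_nonneg_of_le_pi (by positivity) ?_)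
    rw [div_div, div_le_iff₀ (by positivity)]
    nlinarith [Real.pi_pos]

theorem Real.prod_Gamma_add_one_div (n : ℕ) :
    ∏ k ∈ range n, Gamma ((k + 1) / (n + 1)) = (2 * π) ^ ((n : ℝ) / 2) / (n + 1) ^ (1 / 2 : ℝ) := by
  have hn : (0 : ℝ) < n + 1 := by positivity
  have hreflect : ∏ k ∈ range n, Gamma (1 - (k + 1) / (n + 1)) =
      ∏ k ∈ range n, Gamma ((k + 1) / (n + 1)) := by
    rw [← prod_range_reflect]
    refine prod_congr rfl fun k hk => ?_
    have hk : ((n - 1 - k : ℕ) : ℝ) + k + 1 = n := by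
      exact_mod_cast (by grind : n - 1 - k + k + 1 = n)
    congr 1
    field_simp
    linarith
  have hsin : ∏ k ∈ range n, Real.sin (π * ((k + 1) / (n + 1))) = (n + 1) / 2 ^ n := by
    have h := prod_two_mul_sin_pi_mul_div n
    rw [prod_mul_distrib, prod_const, card_range] at h
    simp only [mul_div_assoc] at h
    rw [eq_div_iff (by positivity), mul_comm, h]
  have hsq : (∏ k ∈ range n, Gamma ((k + 1) / (n + 1))) ^ 2 = (2 * π) ^ n / (n + 1) := by
    rw [sq]
    nth_rw 2 [← hreflect]
    rw [← prod_mul_distrib]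
    simp only [Real.Gamma_mul_Gamma_one_sub]
    rw [prod_div_distrib, prod_const, card_range, hsin]
    field_simp
    ring
  have hrpow : ((2 * π) ^ ((n : ℝ) / 2) / (n + 1) ^ (1 / 2 : ℝ)) ^ 2 = (2 * π) ^ n / (n + 1) := by
    rw [div_pow, ← Real.rpow_natCast, ← Real.rpow_natCast (_ ^ _), ← Real.rpow_mul (by positivity),
      ← Real.rpow_mul hn.le]
    norm_num
  refine (sq_eq_sq₀ ?_ ?_).mp (hsq.trans hrpow.symm)
  · exact prod_nonneg fun k _ => (Real.Gamma_pos_of_pos (by positivity)).le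
  · positivity

theorem gaussRatio_inv_natCast {n : ℕ} (hn : 0 < n) :
    gaussRatio n (n : ℂ)⁻¹ = ((2 * π : ℝ) : ℂ) ^ (((n : ℂ) - 1) / 2) * (n : ℂ) ^ (1 / 2 : ℂ) := by
  obtain ⟨n, rfl⟩ := Nat.exists_eq_add_one_of_ne_zero hn.ne'
  have hn0 : ((n + 1 : ℕ) : ℂ) ≠ 0 := Nat.cast_ne_zero.mpr n.succ_ne_zero
  have hn0' : (n : ℂ) + 1 ≠ 0 := by exact_mod_cast hn0
  have hprod : ∏ k ∈ range (n + 1), Gamma (((n + 1 : ℕ) : ℂ)⁻¹ + k / (n + 1 : ℕ)) =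
      ((∏ k ∈ range n, Real.Gamma ((k + 1) / (n + 1)) : ℝ) : ℂ) := by
    have hlast : ((n + 1 : ℕ) : ℂ)⁻¹ + n / (n + 1 : ℕ) = 1 := by
      field_simp
      push_cast
      ring
    rw [prod_range_succ, hlast, Complex.Gamma_one, mul_one, ofReal_prod]
    refine prod_congr rfl fun k _ => ?_
    rw [← Complex.Gamma_ofReal]
    congr 1
    push_cast
    field_simp
    ring
  have hexp : (((n + 1 : ℕ) : ℂ) - 1) / 2 = ((n / 2 : ℝ) : ℂ) := by push_cast; ring
  have hhalf : (1 / 2 : ℂ) = ((1 / 2 : ℝ) : ℂ) := by push_cast; ring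
  have hbase : ((n + 1 : ℕ) : ℂ) = ((n + 1 : ℝ) : ℂ) := by push_cast; ring
  have hsqrt : ((n + 1 : ℝ) ^ (1 / 2 : ℝ)) * (n + 1 : ℝ) ^ (1 / 2 : ℝ) = n + 1 := by
    rw [← Real.rpow_add (by positivity)]
    norm_num
  rw [gaussRatio, hprod, Real.prod_Gamma_add_one_div, mul_inv_cancel₀ hn0, cpow_one,
    Complex.Gamma_one, div_one, hexp, hbase, hhalf, ← ofReal_cpow (by positivity),
    ← ofReal_cpow (by positivity), ← ofReal_mul, ← ofReal_mul]
  congr 1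
  rw [mul_div_assoc', div_eq_iff (by positivity), mul_assoc, hsqrt, mul_comm]

/-- Gauss multiplication formula for the Gamma function:
`Γ(nx) = (2π)^{−(n−1)/2} n^{nx−1/2} ∏_{k=0}^{n−1} Γ(x + k/n)`. -/
theorem gauss_multiplication (n : ℕ) (hn : 1 ≤ n) (x : ℂ)
    (hx : ∀ k : ℕ, k < n → ∀ m : ℕ, x + (k : ℂ) / (n : ℂ) ≠ -(m : ℂ)) :
    Complex.Gamma ((n : ℂ) * x) =
      ((2 * Real.pi : ℝ) : ℂ) ^ (-(((n : ℂ) - 1) / 2)) * (n : ℂ) ^ ((n : ℂ) * x - 1 / 2) *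
        ∏ k ∈ Finset.range n, Complex.Gamma (x + (k : ℂ) / (n : ℂ)) := by
  have hn0 : (n : ℂ) ≠ 0 := Nat.cast_ne_zero.mpr (by omega)
  have hx_inv : ∀ k : ℕ, k < n → ∀ m : ℕ, (n : ℂ)⁻¹ + (k : ℂ) / (n : ℂ) ≠ -(m : ℂ) := by
    intro k _ m h
    have hzero : ((k + m * n + 1 : ℕ) : ℂ) = 0 := by
      field_simp at h
      push_cast
      linear_combination h
    exact (k + m * n).succ_ne_zero (Nat.cast_eq_zero.mp hzero)
  have hG : Gamma (n * x) ≠ 0 := Gamma_ne_zero (natCast_mul_ne_neg_natCast hn hx)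
  have hratio := tendsto_nhds_unique (tendsto_gaussConst hn hx) (tendsto_gaussConst hn hx_inv)
  rw [gaussRatio_inv_natCast hn, gaussRatio, div_eq_iff hG] at hratio
  have h2π : ((2 * π : ℝ) : ℂ) ^ (((n : ℂ) - 1) / 2) ≠ 0 := by
    simp [cpow_eq_zero_iff, Real.pi_ne_zero]
  have hsqrt : (n : ℂ) ^ (1 / 2 : ℂ) ≠ 0 := by simp [cpow_eq_zero_iff, hn0]
  rw [cpow_neg, cpow_sub _ _ hn0, mul_div_assoc', div_mul_eq_mul_div, mul_assoc, hratio]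
  field_simp
end

section
/- Define q(s) = (s+1)(s−2)(5s²+4)/(s(s−1)(5s²−4)) and t(s) = (s+1)²(s−2)/((s−1)²(s+2)) for s in an open interval where all denominators are nonzero and t'(s) ≠ 0. Then the function q ∘ t^{-1} satisfies the Painlevé VI equation with parameters (θ0, θ1, θt, θ∞) = (2, 0, 0, 2/3). -/
/-!
Along the curve `s ↦ (t(s), q(s))` one has `q_t = q'/t'` and `q_tt = (q''t' − q't'')/t'³`, so the
Painlevé VI equation becomes an identity between explicit rational functions of `s`. It reduces to
a polynomial identity once `q − 1`, `t − 1` and `q − t` are written in factored form, since then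
every denominator is a product of the factors `s`, `s ± 1`, `s ± 2` and `5s² ± 4`.
-/

open Filter Topology

theorem hasDerivAt_deriv_div_deriv {𝕜 : Type*} [NontriviallyNormedField 𝕜]
    {f g f' g' : 𝕜 → 𝕜} {f'' g'' x : 𝕜}
    (hf : ∀ᶠ y in 𝓝 x, HasDerivAt f (f' y) y) (hg : ∀ᶠ y in 𝓝 x, HasDerivAt g (g' y) y)
    (hf' : HasDerivAt f' f'' x) (hg' : HasDerivAt g' g'' x) (hgx : g' x ≠ 0) :
    HasDerivAt (fun y => deriv f y / deriv g y) ((f'' * g' x - f' x * g'') / g' x ^ 2) x := by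
  refine (hf'.fun_div hg' hgx).congr_of_eventuallyEq ?_
  filter_upwards [hf, hg] with y hfy hgy
  rw [hfy.deriv, hgy.deriv]

/-- The right-hand side of Painlevé VI, `q_tt = painleveVIRhs θ₀ θ₁ θₜ θinf t q q_t`. -/
noncomputable def painleveVIRhs (θ₀ θ₁ θₜ θinf t q p : ℝ) : ℝ :=
  (1 / 2) * (1 / q + 1 / (q - 1) + 1 / (q - t)) * p ^ 2
    - (1 / t + 1 / (t - 1) + 1 / (q - t)) * p
    + q * (q - 1) * (q - t) / (2 * t ^ 2 * (t - 1) ^ 2) *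
      ((θinf - 1) ^ 2 - θ₀ ^ 2 * t / q ^ 2 + θ₁ ^ 2 * (t - 1) / (q - 1) ^ 2
        + (1 - θₜ ^ 2) * t * (t - 1) / (q - t) ^ 2)

namespace ThreeBranch

noncomputable def q (s : ℝ) : ℝ :=
  (s + 1) * (s - 2) * (5 * s ^ 2 + 4) / (s * (s - 1) * (5 * s ^ 2 - 4))

noncomputable def t (s : ℝ) : ℝ :=
  (s + 1) ^ 2 * (s - 2) / ((s - 1) ^ 2 * (s + 2))

noncomputable def q' (s : ℝ) : ℝ :=
  2 * (s + 2) * (10 * s ^ 4 + 35 * s ^ 3 - 30 * s ^ 2 - 20 * s + 8)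
    / (s * (s - 1) * (5 * s ^ 2 - 4)) ^ 2

noncomputable def t' (s : ℝ) : ℝ :=
  12 * (s + 1) * (s - 1) / ((s - 1) ^ 2 * (s + 2)) ^ 2

noncomputable def q'' (s : ℝ) : ℝ :=
  (-300 * s ^ 8 - 2100 * s ^ 7 - 980 * s ^ 6 + 6240 * s ^ 5 + 240 * s ^ 4 - 3840 * s ^ 3
    + 192 * s ^ 2 + 768 * s - 256) / (s * (s - 1) * (5 * s ^ 2 - 4)) ^ 3

noncomputable def t'' (s : ℝ) : ℝ :=
  (-48 * s ^ 4 + 72 * s ^ 2 + 48 * s - 72) / ((s - 1) ^ 2 * (s + 2)) ^ 3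

variable {s : ℝ}

/-- The last factor is written as `field_simp` normalises it. -/
theorem q_denom_factors_ne_zero (hD : s * (s - 1) * (5 * s ^ 2 - 4) ≠ 0) :
    s ≠ 0 ∧ s - 1 ≠ 0 ∧ s ^ 2 * 5 - 4 ≠ 0 := by
  obtain ⟨h01, h5⟩ := mul_ne_zero_iff.mp hD
  obtain ⟨h0, h1⟩ := mul_ne_zero_iff.mp h01
  exact ⟨h0, h1, by rwa [mul_comm]⟩

theorem t_denom_factors_ne_zero (hE : (s - 1) ^ 2 * (s + 2) ≠ 0) : s - 1 ≠ 0 ∧ s + 2 ≠ 0 := by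
  simpa only [mul_ne_zero_iff, ne_eq, pow_eq_zero_iff two_ne_zero] using hE

theorem hasDerivAt_q (hD : s * (s - 1) * (5 * s ^ 2 - 4) ≠ 0) : HasDerivAt q (q' s) s := by
  have hN := (((hasDerivAt_id' s).add_const 1).fun_mul ((hasDerivAt_id' s).sub_const 2)).fun_mul
    (((hasDerivAt_pow 2 s).const_mul 5).add_const 4)
  have hD' := ((hasDerivAt_id' s).fun_mul ((hasDerivAt_id' s).sub_const 1)).fun_mul
    (((hasDerivAt_pow 2 s).const_mul 5).sub_const 4)
  refine (hN.fun_div hD' hD).congr_deriv ?_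
  simp only [q']
  field_simp
  ring

theorem hasDerivAt_t (hE : (s - 1) ^ 2 * (s + 2) ≠ 0) : HasDerivAt t (t' s) s := by
  have hN := (((hasDerivAt_id' s).add_const 1).fun_pow 2).fun_mul ((hasDerivAt_id' s).sub_const 2)
  have hE' := (((hasDerivAt_id' s).sub_const 1).fun_pow 2).fun_mul ((hasDerivAt_id' s).add_const 2)
  refine (hN.fun_div hE' hE).congr_deriv ?_
  obtain ⟨h1, h2⟩ := t_denom_factors_ne_zero hE
  simp only [t']
  field_simp
  ring

theorem hasDerivAt_q' (hD : s * (s - 1) * (5 * s ^ 2 - 4) ≠ 0) : HasDerivAt q' (q'' s) s := by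
  have hquartic := (((((hasDerivAt_pow 4 s).const_mul 10).fun_add
    ((hasDerivAt_pow 3 s).const_mul 35)).fun_sub ((hasDerivAt_pow 2 s).const_mul 30)).fun_sub
    ((hasDerivAt_id' s).const_mul 20)).add_const 8
  have hN := (((hasDerivAt_id' s).add_const 2).const_mul 2).fun_mul hquartic
  have hD' := (((hasDerivAt_id' s).fun_mul ((hasDerivAt_id' s).sub_const 1)).fun_mul
    (((hasDerivAt_pow 2 s).const_mul 5).sub_const 4)).fun_pow 2
  refine (hN.fun_div hD' (pow_ne_zero 2 hD)).congr_deriv ?_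
  obtain ⟨h0, h1, h5⟩ := q_denom_factors_ne_zero hD
  simp only [q'', Nat.cast_ofNat]
  field_simp
  ring

theorem hasDerivAt_t' (hE : (s - 1) ^ 2 * (s + 2) ≠ 0) : HasDerivAt t' (t'' s) s := by
  have hN := (((hasDerivAt_id' s).add_const 1).const_mul 12).fun_mul
    ((hasDerivAt_id' s).sub_const 1)
  have hE' := ((((hasDerivAt_id' s).sub_const 1).fun_pow 2).fun_mul
    ((hasDerivAt_id' s).add_const 2)).fun_pow 2
  refine (hN.fun_div hE' (pow_ne_zero 2 hE)).congr_deriv ?_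
  obtain ⟨h1, h2⟩ := t_denom_factors_ne_zero hE
  simp only [t'']
  field_simp
  ring

theorem eventually_hasDerivAt_q (hD : s * (s - 1) * (5 * s ^ 2 - 4) ≠ 0) :
    ∀ᶠ r in 𝓝 s, HasDerivAt q (q' r) r :=
  ((by fun_prop : Continuous fun r : ℝ => r * (r - 1) * (5 * r ^ 2 - 4)).continuousAt.eventually_ne
    hD).mono fun _ => hasDerivAt_q

theorem eventually_hasDerivAt_t (hE : (s - 1) ^ 2 * (s + 2) ≠ 0) :
    ∀ᶠ r in 𝓝 s, HasDerivAt t (t' r) r :=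
  ((by fun_prop : Continuous fun r : ℝ => (r - 1) ^ 2 * (r + 2)).continuousAt.eventually_ne
    hE).mono fun _ => hasDerivAt_t

theorem t'_ne_zero (hE : (s - 1) ^ 2 * (s + 2) ≠ 0) (hs : s + 1 ≠ 0) : t' s ≠ 0 :=
  div_ne_zero (mul_ne_zero (mul_ne_zero (by norm_num) hs) (t_denom_factors_ne_zero hE).1)
    (pow_ne_zero 2 hE)

theorem q_sub_one (hD : s * (s - 1) * (5 * s ^ 2 - 4) ≠ 0) :
    q s - 1 = -2 * (s + 2) ^ 2 / (s * (s - 1) * (5 * s ^ 2 - 4)) := by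
  rw [q, div_sub_one hD]
  ring

theorem t_sub_one (hE : (s - 1) ^ 2 * (s + 2) ≠ 0) :
    t s - 1 = -4 / ((s - 1) ^ 2 * (s + 2)) := by
  rw [t, div_sub_one hE]
  ring

theorem q_sub_t (hD : s * (s - 1) * (5 * s ^ 2 - 4) ≠ 0) (hE : (s - 1) ^ 2 * (s + 2) ≠ 0) :
    q s - t s = -2 * (s + 1) * (s - 2) ^ 3 / (s * (s - 1) ^ 2 * (s + 2) * (5 * s ^ 2 - 4)) := by
  obtain ⟨h0, h1, h5⟩ := q_denom_factors_ne_zero hD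
  obtain ⟨-, h2⟩ := t_denom_factors_ne_zero hE
  rw [q, t]
  field_simp
  ring

theorem parametric_secondDeriv_eq_painleveVIRhs (hD : s * (s - 1) * (5 * s ^ 2 - 4) ≠ 0)
    (hE : (s - 1) ^ 2 * (s + 2) ≠ 0) (hN : (s + 1) * (s - 2) ≠ 0) :
    (q'' s * t' s - q' s * t'' s) / t' s ^ 2 / t' s =
      painleveVIRhs 2 0 0 (2 / 3) (t s) (q s) (q' s / t' s) := by
  rw [painleveVIRhs, q_sub_one hD, t_sub_one hE, q_sub_t hD hE]
  obtain ⟨h0, h1, h5⟩ := q_denom_factors_ne_zero hD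
  obtain ⟨-, h2⟩ := t_denom_factors_ne_zero hE
  obtain ⟨hm1, hm2⟩ := mul_ne_zero_iff.mp hN
  have h54 : s ^ 2 * 5 + 4 ≠ 0 := by positivity
  simp only [q, t, q', t', q'', t'']
  field_simp
  ring

end ThreeBranch

open ThreeBranch

/-- The rational curve `q(s) = (s+1)(s−2)(5s²+4)/(s(s−1)(5s²−4))`,
`t(s) = (s+1)²(s−2)/((s−1)²(s+2))` defines a solution of Painlevé VI with parameters
`(θ0, θ1, θt, θ∞) = (2, 0, 0, 2/3)`, in parametric form. -/
theorem algebraic_PVI_solution_three_branch (a b : ℝ) :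
    ∀ Q T : ℝ → ℝ,
      (Q = fun s : ℝ => (s + 1) * (s - 2) * (5 * s ^ 2 + 4) / (s * (s - 1) * (5 * s ^ 2 - 4))) →
      (T = fun s : ℝ => (s + 1) ^ 2 * (s - 2) / ((s - 1) ^ 2 * (s + 2))) →
      (∀ s ∈ Set.Ioo a b, s ≠ 0 ∧ s ≠ 1 ∧ 5 * s ^ 2 - 4 ≠ 0 ∧ s ≠ -2 ∧ deriv T s ≠ 0) →
      (∀ s ∈ Set.Ioo a b,
        Q s ≠ 0 ∧ Q s ≠ 1 ∧ Q s ≠ T s ∧ T s ≠ 0 ∧ T s ≠ 1) →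
      ∀ s ∈ Set.Ioo a b,
        (fun qt : ℝ → ℝ =>
          deriv qt s / deriv T s =
            (1 / 2) * (1 / Q s + 1 / (Q s - 1) + 1 / (Q s - T s)) * (qt s) ^ 2
            - (1 / T s + 1 / (T s - 1) + 1 / (Q s - T s)) * qt s
            + Q s * (Q s - 1) * (Q s - T s) / (2 * (T s) ^ 2 * (T s - 1) ^ 2) *
              ((2 / 3 - 1) ^ 2 - (2 : ℝ) ^ 2 * T s / (Q s) ^ 2
                + (0 : ℝ) ^ 2 * (T s - 1) / (Q s - 1) ^ 2
                + (1 - (0 : ℝ) ^ 2) * T s * (T s - 1) / (Q s - T s) ^ 2))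
        (fun r : ℝ => deriv Q r / deriv T r) := by
  rintro Q T rfl rfl hregular hgeneric s hs
  obtain ⟨h0, h1, h5, h2, -⟩ := hregular s hs
  have hD : s * (s - 1) * (5 * s ^ 2 - 4) ≠ 0 :=
    mul_ne_zero (mul_ne_zero h0 (sub_ne_zero.mpr h1)) h5
  have hE : (s - 1) ^ 2 * (s + 2) ≠ 0 :=
    mul_ne_zero (pow_ne_zero 2 (sub_ne_zero.mpr h1)) (by contrapose! h2; linarith)
  have hN : (s + 1) * (s - 2) ≠ 0 := fun h =>
    (hgeneric s hs).1 (by simp only [h, zero_mul, zero_div])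
  have hsecond := hasDerivAt_deriv_div_deriv (eventually_hasDerivAt_q hD)
    (eventually_hasDerivAt_t hE) (hasDerivAt_q' hD) (hasDerivAt_t' hE)
    (t'_ne_zero hE (left_ne_zero_of_mul hN))
  change deriv (fun r => deriv q r / deriv t r) s / deriv t s =
    painleveVIRhs 2 0 0 (2 / 3) (t s) (q s) (deriv q s / deriv t s)
  rw [hsecond.deriv, (hasDerivAt_q hD).deriv, (hasDerivAt_t hE).deriv]
  exact parametric_secondDeriv_eq_painleveVIRhs hD hE hN
end
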